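/- For each v in the binary tree, Σ_{z ∈ S_{|v|}} |⟨δ_v, N δ_z⟩| ≤ 2|v| (for |v| ≥ 1), where N is the Haar-level operator on ℓ²(S_{|v|}). -/

import Mathlib

noncomputable section

/-- The sphere S_r of the binary tree, identified with {0,1}^r. -/
abbrev Sph (r : ℕ) := {l : List Bool // l.length = r}

/-- Index set for the Haar basis of ℓ²(S_r): `none` is the constant function
(level 0); `some p`, with p a binary word of length n−1 (1 ≤ n ≤ r), indexes
the level-n Haar function supported on the dyadic block of the 2^{r−n+1}
vertices having suffix p. -/
abbrev HaarIdx (r : ℕ) := Option {p : List Bool // p.length < r}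

/-- The level n(α) of a Haar basis function. -/
def haarLevel {r : ℕ} : HaarIdx r → ℕ
  | none => 0
  | some p => p.1.length + 1

/-- The Haar basis function ρ_α of ℓ²(S_r): the constant 2^{−r/2} at level 0,
and at level n the function supported on a dyadic block of size 2^{r−n+1}
taking the values ±2^{−(r−n+1)/2} on its two halves. -/
def haarFn {r : ℕ} (α : HaarIdx r) (v : Sph r) : ℂ :=
  match α with
  | none => ((Real.sqrt (2 ^ r))⁻¹ : ℝ)
  | some p =>
      if p.1 <:+ v.1 then
        (if v.1.getD (r - p.1.length - 1) true then 1 else -1)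
          * ((Real.sqrt (2 ^ (r - p.1.length)))⁻¹ : ℝ)
      else 0

/-- The Haar-level operator N = Σ_α n(α) ⟨ρ_α, ·⟩ ρ_α on ℓ²(S_r). -/
def NOp {r : ℕ} (φ : Sph r → ℂ) : Sph r → ℂ :=
  fun z => ∑' α : HaarIdx r,
    (haarLevel α : ℂ) * haarFn α z * ∑' w : Sph r, (starRingEnd ℂ) (haarFn α w) * φ w

/-- The standard basis vector δ_w. -/
def delta {r : ℕ} (w : Sph r) : Sph r → ℂ := fun u => if u = w then 1 else 0

/-- The matrix element ⟨δ_z, N δ_w⟩. -/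
def Nent {r : ℕ} (z w : Sph r) : ℂ := NOp (delta w) z

/-!
Write `εⱼ(v, z) ∈ {0, 1}` for the indicator that `v` and `z` have the same last `j` letters. The
product of the two level-`(k+1)` Haar values at `v` and `z` is `(2 εₖ₊₁ − εₖ) / 2 ^ (r − k)`, so
Abel summation turns `⟨δ_v, N δ_z⟩` into the closed form `r εᵣ − 2⁻ʳ ∑_{j<r} 2ʲ εⱼ`. Both terms
are nonnegative, and summed over `z` each contributes exactly `r`: exactly `2 ^ (r − j)` vertices
share the last `j` letters of `v`.
-/

instance (r : ℕ) : Fintype (Sph r) := inferInstanceAs (Fintype (List.Vector Bool r))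

instance (r : ℕ) : Fintype {p : List Bool // p.length < r} :=
  (List.finite_length_lt Bool r).fintype

lemma List.drop_eq_drop_iff_getElem_and {α : Type*} {l₁ l₂ : List α} {i : ℕ}
    (h₁ : i < l₁.length) (h₂ : i < l₂.length) :
    l₁.drop i = l₂.drop i ↔ l₁[i] = l₂[i] ∧ l₁.drop (i + 1) = l₂.drop (i + 1) := by
  rw [List.drop_eq_getElem_cons h₁, List.drop_eq_getElem_cons h₂, List.cons_eq_cons]

lemma sum_range_succ_mul_two_pow_mul_sub (a : ℕ → ℝ) (n : ℕ) :
    ∑ k ∈ Finset.range n, ((k : ℝ) + 1) * 2 ^ k * (2 * a (k + 1) - a k)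
      = n * 2 ^ n * a n - ∑ k ∈ Finset.range n, 2 ^ k * a k := by
  induction n with
  | zero => simp
  | succ n ih =>
    rw [Finset.sum_range_succ, ih, Finset.sum_range_succ]
    push_cast
    ring

section

variable {r : ℕ}

lemma card_filter_drop_eq (v : Sph r) {k : ℕ} (hk : k ≤ r) :
    (Finset.univ.filter fun z : Sph r => z.1.drop k = v.1.drop k).card = 2 ^ k := by
  have hv : (v.1.drop k).length = r - k := by simp [v.2]
  calc _ = (Finset.univ : Finset (Sph k)).card := by
        refine Finset.card_nbij' (fun z => ⟨z.1.take k, by simp [z.2, hk]⟩)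
          (fun u => ⟨u.1 ++ v.1.drop k, by simp [u.2, hv]; omega⟩) ?_ ?_ ?_ ?_
        · simp
        · intro u _
          simp [List.drop_left' u.2]
        · intro z hz
          simp only [Finset.coe_filter, Finset.mem_univ, true_and, Set.mem_ofPred_eq] at hz
          exact Subtype.ext (by simp [← hz])
        · intro u _
          exact Subtype.ext (List.take_left' u.2)
    _ = 2 ^ k := by rw [Finset.card_univ]; exact (card_vector k).trans (by simp)

def haarRe (α : HaarIdx r) (v : Sph r) : ℝ :=
  match α with
  | none => (Real.sqrt (2 ^ r))⁻¹
  | some p =>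
      if p.1 <:+ v.1 then
        (if v.1.getD (r - p.1.length - 1) true then 1 else -1)
          * (Real.sqrt (2 ^ (r - p.1.length)))⁻¹
      else 0

lemma haarFn_eq_ofReal (α : HaarIdx r) (v : Sph r) : haarFn α v = haarRe α v := by
  cases α with
  | none => rfl
  | some p =>
    simp only [haarFn, haarRe]
    split_ifs <;> push_cast <;> ring

def haarKernel (v z : Sph r) : ℝ :=
  ∑ α : HaarIdx r, (haarLevel α : ℝ) * haarRe α v * haarRe α z

lemma Nent_eq_haarKernel (v z : Sph r) : Nent v z = haarKernel v z := by
  simp only [Nent, NOp, delta, haarKernel, tsum_fintype, mul_ite, mul_one, mul_zero,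
    Finset.sum_ite_eq', Finset.mem_univ, if_true, haarFn_eq_ofReal, Complex.conj_ofReal]
  push_cast
  rfl

def suffixMatch (j : ℕ) (v z : Sph r) : ℝ :=
  if z.1.drop (r - j) = v.1.drop (r - j) then 1 else 0

lemma suffixMatch_nonneg (j : ℕ) (v z : Sph r) : 0 ≤ suffixMatch j v z := by
  unfold suffixMatch; split_ifs <;> norm_num

lemma sum_suffixMatch (j : ℕ) (v : Sph r) : ∑ z, suffixMatch j v z = 2 ^ (r - j) := by
  simp only [suffixMatch, Finset.sum_boole, card_filter_drop_eq v (Nat.sub_le r j)]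
  norm_num

lemma haarRe_mul_haarRe (v z : Sph r) (p : {p : List Bool // p.length < r}) (hp : p.1 <:+ v.1) :
    haarRe (some p) v * haarRe (some p) z
      = (2 * suffixMatch (p.1.length + 1) v z - suffixMatch p.1.length v z)
          / 2 ^ (r - p.1.length) := by
  obtain ⟨p, hk⟩ := p
  simp only at hp ⊢
  have hpv : p = v.1.drop (r - p.length) := by
    have := List.suffix_iff_eq_drop.1 hp; rwa [v.2] at this
  have hsuf : p <:+ z.1 ↔ z.1.drop (r - p.length) = v.1.drop (r - p.length) := by
    rw [List.suffix_iff_eq_drop, z.2, eq_comm, ← hpv]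
  have hstep : z.1.drop (r - (p.length + 1)) = v.1.drop (r - (p.length + 1)) ↔
      z.1.getD (r - p.length - 1) true = v.1.getD (r - p.length - 1) true ∧
        z.1.drop (r - p.length) = v.1.drop (r - p.length) := by
    have hz : r - p.length - 1 < z.1.length := by rw [z.2]; omega
    have hv : r - p.length - 1 < v.1.length := by rw [v.2]; omega
    rw [Nat.sub_add_eq, List.drop_eq_drop_iff_getElem_and hz hv, Nat.sub_one_add_one (by omega),
      List.getD_eq_getElem _ _ hz, List.getD_eq_getElem _ _ hv]
  have hc : (Real.sqrt (2 ^ (r - p.length)))⁻¹ * (Real.sqrt (2 ^ (r - p.length)))⁻¹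
      = 1 / 2 ^ (r - p.length) := by
    rw [← mul_inv, Real.mul_self_sqrt (by positivity), one_div]
  simp only [haarRe, suffixMatch, hstep, if_pos hp]
  by_cases hz : z.1.drop (r - p.length) = v.1.drop (r - p.length)
  · rw [if_pos (hsuf.2 hz), mul_mul_mul_comm, hc]
    cases z.1.getD (r - p.length - 1) true <;> cases v.1.getD (r - p.length - 1) true <;>
      simp [hz] <;> ring
  · simp [hz, mt hsuf.1 hz]

lemma sum_suffix_eq_sum_range (v : Sph r) (f : ℕ → ℝ) :
    ∑ p : {p : List Bool // p.length < r}, (if p.1 <:+ v.1 then f p.1.length else 0)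
      = ∑ k ∈ Finset.range r, f k := by
  have hlen (k : Fin r) : (v.1.drop (r - k)).length = k := by simp [v.2]; omega
  rw [← Fin.sum_univ_eq_sum_range]
  refine (Fintype.sum_of_injective (fun k : Fin r => ⟨v.1.drop (r - k), (hlen k).trans_lt k.2⟩)
    (fun k l hkl => Fin.ext ?_) _ _ ?_ fun k => ?_).symm
  · simpa [hlen] using congrArg (fun p : {p : List Bool // p.length < r} => p.1.length) hkl
  · intro p hp
    refine if_neg fun hpv => hp ⟨⟨p.1.length, p.2⟩, Subtype.ext ?_⟩
    have := List.suffix_iff_eq_drop.1 hpv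
    rw [v.2] at this
    exact this.symm
  · simp [hlen, List.drop_suffix]

lemma haarKernel_eq_sum_range (v z : Sph r) :
    haarKernel v z = ∑ k ∈ Finset.range r,
      ((k : ℝ) + 1) * ((2 * suffixMatch (k + 1) v z - suffixMatch k v z) / 2 ^ (r - k)) := by
  rw [haarKernel, Fintype.sum_option, ← sum_suffix_eq_sum_range v]
  simp only [haarLevel, Nat.cast_zero, zero_mul, zero_add]
  refine Finset.sum_congr rfl fun p _ => ?_
  split_ifs with hp
  · rw [mul_assoc, haarRe_mul_haarRe v z p hp]
    push_cast
    ring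
  · simp [haarRe, hp]

lemma haarKernel_eq (v z : Sph r) :
    haarKernel v z = r * suffixMatch r v z
      - (∑ j ∈ Finset.range r, 2 ^ j * suffixMatch j v z) / 2 ^ r := by
  have hpow (k : ℕ) (hk : k ≤ r) (x : ℝ) : x / 2 ^ (r - k) = 2 ^ k * x / 2 ^ r := by
    rw [div_eq_div_iff (by positivity) (by positivity), ← pow_sub_mul_pow 2 hk]
    ring
  calc haarKernel v z = (∑ k ∈ Finset.range r,
        ((k : ℝ) + 1) * 2 ^ k * (2 * suffixMatch (k + 1) v z - suffixMatch k v z)) / 2 ^ r := by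
        rw [haarKernel_eq_sum_range, Finset.sum_div]
        refine Finset.sum_congr rfl fun k hk => ?_
        rw [hpow k (Finset.mem_range.1 hk).le]
        ring
    _ = _ := by
        rw [sum_range_succ_mul_two_pow_mul_sub (suffixMatch · v z)]
        field_simp

end

theorem N_row_sum_bound_general (r : ℕ) (v : Sph r) :
    ∑' z : Sph r, ‖Nent v z‖ ≤ 2 * r := by
  have hbound (z : Sph r) : ‖Nent v z‖
      ≤ r * suffixMatch r v z + (∑ j ∈ Finset.range r, 2 ^ j * suffixMatch j v z) / 2 ^ r := by
    have hS : 0 ≤ ∑ j ∈ Finset.range r, 2 ^ j * suffixMatch j v z :=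
      Finset.sum_nonneg fun j _ => mul_nonneg (by positivity) (suffixMatch_nonneg j v z)
    rw [Nent_eq_haarKernel, Complex.norm_real, Real.norm_eq_abs, haarKernel_eq]
    refine (abs_sub _ _).trans_eq ?_
    rw [abs_of_nonneg (mul_nonneg r.cast_nonneg (suffixMatch_nonneg r v z)),
      abs_of_nonneg (div_nonneg hS (by positivity))]
  calc ∑' z, ‖Nent v z‖ = ∑ z, ‖Nent v z‖ := tsum_fintype _
    _ ≤ ∑ z, (r * suffixMatch r v z
          + (∑ j ∈ Finset.range r, 2 ^ j * suffixMatch j v z) / 2 ^ r) :=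
        Finset.sum_le_sum fun z _ => hbound z
    _ = r + ∑ j ∈ Finset.range r, (2 : ℝ) ^ j * 2 ^ (r - j) / 2 ^ r := by
        rw [Finset.sum_add_distrib, ← Finset.mul_sum, ← Finset.sum_div, Finset.sum_comm]
        simp only [← Finset.mul_sum, sum_suffixMatch, Nat.sub_self, pow_zero, mul_one,
          Finset.sum_div]
    _ = 2 * r := by
        rw [Finset.sum_congr rfl fun j hj => by
          rw [← pow_add, Nat.add_sub_cancel' (Finset.mem_range.1 hj).le, div_self (by positivity)]]
        rw [Finset.sum_const, Finset.card_range, nsmul_eq_mul, mul_one]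
        ring

/-- for each vertex v of the binary tree with |v| = r ≥ 1,
Σ_{z ∈ S_r} |⟨δ_v, N δ_z⟩| ≤ 2|v|, N the Haar-level operator on ℓ²(S_r). -/
theorem N_row_sum_bound (r : ℕ) (hr : 1 ≤ r) (v : Sph r) :
    ∑' z : Sph r, ‖Nent v z‖ ≤ 2 * r :=
  N_row_sum_bound_general r v

end
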